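/- arXiv:1801.09654 — 3 statements merged into one kernel-verified Lean document; each statement's English description precedes it below -/
import Mathlib

section
/- If fractional revival occurs between strongly cospectral vertices a and b in a connected graph at time τ, then for all eigenvalues θ_i, θ_j, θ_r, θ_s all lying in Φ_{a,b}^+ (or all in Φ_{a,b}^-) with θ_r ≠ θ_s, the ratio (θ_i - θ_j)/(θ_r - θ_s) is rational. -/
open Matrix Complex BigOperators

/-- Continuous-time quantum walk `U(t) = exp(-itA)` of a real (weighted) adjacency matrix. -/
noncomputable def qwalk {V : Type*} [Fintype V] [DecidableEq V]
    (A : Matrix V V ℝ) (t : ℝ) : Matrix V V ℂ :=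
  NormedSpace.exp ((-(Complex.I * (t : ℂ))) • A.map (fun x => (x : ℂ)))

/-- Characteristic (standard basis) vector of a vertex, over `ℂ`. -/
noncomputable def eC {V : Type*} [DecidableEq V] (a : V) : V → ℂ := Pi.single a 1

/-- Characteristic (standard basis) vector of a vertex, over `ℝ`. -/
noncomputable def eR {V : Type*} [DecidableEq V] (a : V) : V → ℝ := Pi.single a 1

/-!
Projecting the revival equation `U(τ) e_a = α e_a + β e_b` onto an eigenspace `E_r` with
`E_r e_b = ε E_r e_a ≠ 0` (`ε = ±1`) shows that the eigenvalue `exp(-iτθ_r)` of `U(τ)` is `α + ε β`.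
Hence on `Φ⁺`, and likewise on `Φ⁻`, all the values `exp(-iτθ_r)` coincide, that is
`τ (θ_i - θ_j) ∈ 2πℤ`; as `β ≠ 0` forces `τ ≠ 0`, the differences are rational multiples of one another.
-/

namespace OrthogonalIdempotents

variable {R 𝔸 ι : Type*} [CommSemiring R] [Semiring 𝔸] [Algebra R 𝔸] [Fintype ι]
  {e : ι → 𝔸}

theorem mul_sum_smul (he : OrthogonalIdempotents e) (c : ι → R) (j : ι) :
    e j * ∑ i, c i • e i = c j • e j := by
  classical
  simp [Finset.mul_sum, he.mul_eq]

end OrthogonalIdempotents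

namespace CompleteOrthogonalIdempotents

section Algebra

variable {R 𝔸 ι : Type*} [CommSemiring R] [Semiring 𝔸] [Algebra R 𝔸] [Fintype ι]
  {e : ι → 𝔸}

theorem sum_smul_pow (he : CompleteOrthogonalIdempotents e) (c : ι → R) (k : ℕ) :
    (∑ i, c i • e i) ^ k = ∑ i, c i ^ k • e i := by
  induction k with
  | zero => simp [he.complete]
  | succ k ih =>
    simp only [pow_succ, ih, Finset.sum_mul, smul_mul_assoc,
      he.toOrthogonalIdempotents.mul_sum_smul, smul_smul]

end Algebra

variable {𝔸 ι : Type*} [Ring 𝔸] [Algebra ℂ 𝔸] [TopologicalSpace 𝔸] [IsTopologicalRing 𝔸]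
  [ContinuousSMul ℂ 𝔸] [T2Space 𝔸] [Fintype ι] {e : ι → 𝔸}

theorem exp_sum_smul (he : CompleteOrthogonalIdempotents e) (c : ι → ℂ) :
    NormedSpace.exp (∑ i, c i • e i) = ∑ i, Complex.exp (c i) • e i := by
  have hexp : ∀ z : ℂ, HasSum (fun k : ℕ => (k.factorial : ℂ)⁻¹ * z ^ k) (Complex.exp z) := by
    intro z
    simpa [Complex.exp_eq_exp_ℂ, NormedSpace.exp_eq_tsum ℂ, smul_eq_mul] using
      (NormedSpace.expSeries_summable' (𝕂 := ℂ) z).hasSum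
  rw [NormedSpace.exp_eq_tsum ℂ]
  simp only [he.sum_smul_pow, Finset.smul_sum, smul_smul]
  exact (hasSum_sum fun i _ => (hexp (c i)).smul_const (e i)).tsum_eq

end CompleteOrthogonalIdempotents

theorem Matrix.eq_add_mul_of_mul_eq_smul {K V : Type*} [Field K] [Fintype V]
    {P U : Matrix V V K} {x y : V → K} {μ α β ε : K} (hPU : P * U = μ • P)
    (hUx : U *ᵥ x = α • x + β • y) (hPy : P *ᵥ y = ε • P *ᵥ x) (hPx : P *ᵥ x ≠ 0) :
    μ = α + ε * β := by
  refine smul_left_injective K hPx ?_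
  calc μ • P *ᵥ x = (P * U) *ᵥ x := by rw [hPU, smul_mulVec]
    _ = P *ᵥ (U *ᵥ x) := (mulVec_mulVec _ _ _).symm
    _ = (α + ε * β) • P *ᵥ x := by
      rw [hUx, mulVec_add, mulVec_smul, mulVec_smul, hPy, smul_smul, add_smul, mul_comm]

section QuantumWalk

variable {V ι : Type*} [Fintype V] [DecidableEq V] [Fintype ι]

theorem map_ofReal_mulVec_eC (M : Matrix V V ℝ) (a : V) :
    M.map ofReal *ᵥ eC a = ofReal ∘ (M *ᵥ eR a) := by
  ext i
  have heC : eC a = ofRealHom ∘ eR a := by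
    ext j
    simp [eC, eR, Pi.single_apply]
  exact heC ▸ (ofRealHom.map_mulVec M (eR a) i).symm

theorem qwalk_zero (A : Matrix V V ℝ) : qwalk A 0 = 1 := by
  simp [qwalk]

theorem qwalk_eq_sum {A : Matrix V V ℝ} {θ : ι → ℝ} {E : ι → Matrix V V ℝ}
    (hE : CompleteOrthogonalIdempotents E) (hA : A = ∑ r, θ r • E r) (t : ℝ) :
    qwalk A t = ∑ r, cexp (-(I * t) * θ r) • (E r).map ofReal := by
  have hE' := hE.map (ofRealHom.mapMatrix (m := V))
  have hexponent : -(I * t) • A.map ofReal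
      = ∑ r, (-(I * t) * θ r) • (ofRealHom.mapMatrix ∘ E) r := by
    ext i j
    simp [hA, Matrix.sum_apply, Finset.mul_sum, mul_assoc]
  rw [qwalk, hexponent, hE'.exp_sum_smul]
  rfl

theorem map_ofReal_mul_qwalk {A : Matrix V V ℝ} {θ : ι → ℝ} {E : ι → Matrix V V ℝ}
    (hE : CompleteOrthogonalIdempotents E) (hA : A = ∑ r, θ r • E r) (t : ℝ) (j : ι) :
    (E j).map ofReal * qwalk A t = cexp (-(I * t) * θ j) • (E j).map ofReal :=
  qwalk_eq_sum hE hA t ▸ (hE.map (ofRealHom.mapMatrix (m := V))).mul_sum_smul _ j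

theorem ne_zero_of_qwalk_mulVec_eC {A : Matrix V V ℝ} {τ : ℝ} {a b : V} (hab : a ≠ b)
    {α β : ℂ} (hβ : β ≠ 0) (hrev : qwalk A τ *ᵥ eC a = α • eC a + β • eC b) : τ ≠ 0 := by
  rintro rfl
  have hb := congrFun hrev b
  simp [qwalk_zero, eC, hab.symm] at hb
  exact hβ hb.symm

theorem cexp_eq_of_qwalk_mulVec_eC {A : Matrix V V ℝ} {θ : ι → ℝ} {E : ι → Matrix V V ℝ}
    (hE : CompleteOrthogonalIdempotents E) (hA : A = ∑ r, θ r • E r) {τ : ℝ} {a b : V}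
    {α β : ℂ} (hrev : qwalk A τ *ᵥ eC a = α • eC a + β • eC b) {j : ι} {ε : ℝ}
    (ha : E j *ᵥ eR a ≠ 0) (hb : E j *ᵥ eR b = ε • E j *ᵥ eR a) :
    cexp (-(I * τ) * θ j) = α + ε * β := by
  refine eq_add_mul_of_mul_eq_smul (map_ofReal_mul_qwalk hE hA τ j) hrev ?_ ?_
  · rw [map_ofReal_mulVec_eC, map_ofReal_mulVec_eC, hb]
    ext i
    simp
  · rw [map_ofReal_mulVec_eC]
    exact fun h => ha (funext fun i => by simpa using congrFun h i)

end QuantumWalk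

theorem exists_int_of_cexp_eq {τ x y : ℝ} (h : cexp (-(I * τ) * x) = cexp (-(I * τ) * y)) :
    ∃ k : ℤ, τ * (x - y) = 2 * Real.pi * k := by
  obtain ⟨k, hk⟩ := Complex.exp_eq_exp_iff_exists_int.1 h
  refine ⟨-k, ofReal_injective (mul_left_cancel₀ I_ne_zero ?_)⟩
  push_cast
  linear_combination -hk

theorem exists_rat_of_cexp_eq {τ w x y z : ℝ} (hτ : τ ≠ 0)
    (hwx : cexp (-(I * τ) * w) = cexp (-(I * τ) * x))
    (hyz : cexp (-(I * τ) * y) = cexp (-(I * τ) * z)) (hne : y ≠ z) :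
    ∃ q : ℚ, w - x = q * (y - z) := by
  obtain ⟨k, hk⟩ := exists_int_of_cexp_eq hwx
  obtain ⟨l, hl⟩ := exists_int_of_cexp_eq hyz
  have hl0 : (l : ℝ) ≠ 0 := by
    intro h0
    rw [h0, mul_zero, mul_eq_zero, sub_eq_zero] at hl
    exact hl.elim hτ hne
  refine ⟨k / l, ?_⟩
  push_cast
  rw [div_mul_eq_mul_div, eq_div_iff hl0]
  apply mul_left_cancel₀ hτ
  linear_combination (l : ℝ) * hk - (k : ℝ) * hl

theorem stmt4_general {n m : ℕ} (A : Matrix (Fin n) (Fin n) ℝ)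
    (θ : Fin m → ℝ) (E : Fin m → Matrix (Fin n) (Fin n) ℝ)
    (hdecomp : A = ∑ r, θ r • E r)
    (hsum : ∑ r, E r = 1)
    (horth : ∀ r s, E r * E s = if r = s then E r else 0)
    (a b : Fin n) (hab : a ≠ b)
    (τ : ℝ) (α β : ℂ) (hβ : β ≠ 0)
    (hrev : (qwalk A τ) *ᵥ eC a = α • eC a + β • eC b) :
    (∀ i j r s : Fin m,
      (∀ x ∈ [i, j, r, s], E x *ᵥ eR a ≠ 0 ∧ E x *ᵥ eR a = E x *ᵥ eR b) →
      θ r ≠ θ s → ∃ q : ℚ, θ i - θ j = q * (θ r - θ s)) ∧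
    (∀ i j r s : Fin m,
      (∀ x ∈ [i, j, r, s], E x *ᵥ eR a ≠ 0 ∧ E x *ᵥ eR a = -(E x *ᵥ eR b)) →
      θ r ≠ θ s → ∃ q : ℚ, θ i - θ j = q * (θ r - θ s)) := by
  have hE : CompleteOrthogonalIdempotents E := ⟨OrthogonalIdempotents.iff_mul_eq.2 horth, hsum⟩
  have hτ := ne_zero_of_qwalk_mulVec_eC hab hβ hrev
  have hratio : ∀ ε : ℝ, ∀ i j r s : Fin m,
      (∀ x ∈ [i, j, r, s], E x *ᵥ eR a ≠ 0 ∧ E x *ᵥ eR b = ε • E x *ᵥ eR a) →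
      θ r ≠ θ s → ∃ q : ℚ, θ i - θ j = q * (θ r - θ s) := by
    intro ε i j r s h hne
    have hw : ∀ x ∈ [i, j, r, s], cexp (-(I * τ) * θ x) = α + ε * β := fun x hx =>
      cexp_eq_of_qwalk_mulVec_eC hE hdecomp hrev (h x hx).1 (h x hx).2
    exact exists_rat_of_cexp_eq hτ ((hw i (by simp)).trans (hw j (by simp)).symm)
      ((hw r (by simp)).trans (hw s (by simp)).symm) hne
  refine ⟨fun i j r s h => hratio 1 i j r s fun x hx => ⟨(h x hx).1, ?_⟩,
    fun i j r s h => hratio (-1) i j r s fun x hx => ⟨(h x hx).1, ?_⟩⟩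
  · rw [(h x hx).2, one_smul]
  · rw [(h x hx).2, neg_one_smul, neg_neg]

/-- Ratio condition: fractional revival between strongly cospectral vertices implies
that eigenvalue differences within Φ⁺ (resp. within Φ⁻) have rational ratios. -/
theorem stmt4 {n m : ℕ} (A : Matrix (Fin n) (Fin n) ℝ) (hA : A.IsSymm)
    (θ : Fin m → ℝ) (E : Fin m → Matrix (Fin n) (Fin n) ℝ)
    (hdecomp : A = ∑ r, θ r • E r)
    (hsum : ∑ r, E r = 1)
    (hsymm : ∀ r, (E r).IsSymm)
    (horth : ∀ r s, E r * E s = if r = s then E r else 0)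
    (a b : Fin n) (hab : a ≠ b)
    (hsc : ∀ r, E r *ᵥ eR a = E r *ᵥ eR b ∨ E r *ᵥ eR a = -(E r *ᵥ eR b))
    (τ : ℝ) (α β : ℂ) (hβ : β ≠ 0)
    (hnorm : ‖α‖ ^ 2 + ‖β‖ ^ 2 = 1)
    (hrev : (qwalk A τ) *ᵥ eC a = α • eC a + β • eC b) :
    (∀ i j r s : Fin m,
      (∀ x ∈ [i, j, r, s], E x *ᵥ eR a ≠ 0 ∧ E x *ᵥ eR a = E x *ᵥ eR b) →
      θ r ≠ θ s → ∃ q : ℚ, θ i - θ j = q * (θ r - θ s)) ∧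
    (∀ i j r s : Fin m,
      (∀ x ∈ [i, j, r, s], E x *ᵥ eR a ≠ 0 ∧ E x *ᵥ eR a = -(E x *ᵥ eR b)) →
      θ r ≠ θ s → ∃ q : ℚ, θ i - θ j = q * (θ r - θ s)) :=
  stmt4_general A θ E hdecomp hsum horth a b hab τ α β hβ hrev
end

section
/- Suppose (e^{iζ}cos γ, ie^{iζ}sin γ)-revival occurs between strongly cospectral vertices a and b at time τ with γ/π irrational. Then pretty good state transfer occurs between a and b: for every ε > 0 there is a time t and a unimodular complex ν with ‖U(t)e_a − ν e_b‖ < ε. -/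
open Matrix Complex BigOperators

/-!
Since `A` is real symmetric, `U = qwalk A τ` is a symmetric unitary matrix, so `Uᴴ = conj U`
and unitarity run backwards on the revival `U e_a = α e_a + β e_b` force the mirror image
`U e_b = β e_a + α e_b`. The plane spanned by `e_a, e_b` is then invariant, `U` acts on it as
the rotation by `γ` followed by the phase `e^{iζ}`, and hence
`U(kτ) e_a = e^{ikζ} (cos (kγ) e_a + i sin (kγ) e_b)`. As `γ / π` is irrational, the group
generated by `γ` and `π` is dense in `ℝ`, so `k γ` comes arbitrarily close to `π/2` modulo `π`,
where `cos (kγ)` is small and `sin (kγ)` is close to `±1`.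
-/

open scoped ComplexConjugate

theorem exists_nat_abs_cos_mul_lt {γ : ℝ} (hγ : Irrational (γ / Real.pi)) {δ : ℝ} (hδ : 0 < δ) :
    ∃ k : ℕ, |Real.cos (k * γ)| < δ := by
  obtain ⟨y, hy, hyδ⟩ :=
    Metric.mem_closure_iff.1 (dense_addSubgroupClosure_pair_iff.2 hγ (Real.pi / 2)) δ hδ
  obtain ⟨m, n, rfl⟩ := AddSubgroup.mem_closure_pair.1 hy
  have hm : |Real.cos (m * γ)| < δ :=
    calc |Real.cos (m * γ)| = |Real.cos (m • γ + n • Real.pi) - Real.cos (Real.pi / 2)| := by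
          rw [Real.cos_pi_div_two, sub_zero, zsmul_eq_mul, zsmul_eq_mul,
            Real.cos_add_int_mul_pi, abs_mul, abs_neg_one_zpow, one_mul]
      _ ≤ |m • γ + n • Real.pi - Real.pi / 2| := Real.abs_cos_sub_cos_le _ _
      _ < δ := by rwa [abs_sub_comm, ← Real.dist_eq]
  refine ⟨m.natAbs, ?_⟩
  rcases Int.natAbs_eq m with h | h <;> rw [h] at hm <;> simpa using hm

theorem exists_abs_eq_one_abs_sub_le {c s : ℝ} (h : c ^ 2 + s ^ 2 = 1) :
    ∃ σ : ℝ, |σ| = 1 ∧ |s - σ| ≤ |c| := by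
  have hc : c ^ 2 ≤ |c| := by nlinarith [sq_abs c, abs_nonneg c]
  have hs : |s| ≤ 1 := by nlinarith [sq_abs s, abs_nonneg s, sq_nonneg c]
  rcases le_total 0 s with hs0 | hs0
  · refine ⟨1, abs_one, ?_⟩
    rw [abs_sub_comm, abs_of_nonneg (by linarith [abs_le.1 hs])]
    nlinarith [abs_le.1 hs]
  · refine ⟨-1, by simp, ?_⟩
    rw [sub_neg_eq_add, abs_of_nonneg (by linarith [abs_le.1 hs])]
    nlinarith [abs_le.1 hs]

theorem revival_coeff_normSq (ζ γ : ℝ) :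
    star (exp (I * ζ) * Real.cos γ) * (exp (I * ζ) * Real.cos γ) +
      star (I * exp (I * ζ) * Real.sin γ) * (I * exp (I * ζ) * Real.sin γ) = 1 := by
  have hphase : conj (exp (I * ζ)) * exp (I * ζ) = 1 := by
    rw [← Complex.exp_conj, ← Complex.exp_add]
    simp
  have htrig : (Real.cos γ : ℂ) ^ 2 + (Real.sin γ : ℂ) ^ 2 = 1 := by
    exact_mod_cast Real.cos_sq_add_sin_sq γ
  simp only [star_mul', star_def, conj_ofReal, conj_I]
  linear_combination ((Real.cos γ : ℂ) ^ 2 + (Real.sin γ : ℂ) ^ 2) * hphase + htrig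
    - conj (exp (I * ζ)) * exp (I * ζ) * (Real.sin γ : ℂ) ^ 2 * I_sq

theorem revival_coeff_orth (ζ γ : ℝ) :
    star (exp (I * ζ) * Real.cos γ) * (I * exp (I * ζ) * Real.sin γ) +
      star (I * exp (I * ζ) * Real.sin γ) * (exp (I * ζ) * Real.cos γ) = 0 := by
  simp only [star_mul', star_def, conj_ofReal, conj_I]
  ring

section

variable {V : Type*} [Fintype V] [DecidableEq V]

omit [Fintype V] in
theorem star_eC (a : V) : star (eC a) = eC a := by
  simp [eC]

theorem norm_eC (a : V) : ‖eC a‖ = 1 := by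
  simp [eC, Pi.norm_single]

theorem norm_smul_eC_add_smul_eC_le (x y : ℂ) (a b : V) :
    ‖x • eC a + y • eC b‖ ≤ ‖x‖ + ‖y‖ := by
  simpa [norm_smul, norm_eC] using norm_add_le (x • eC a) (y • eC b)

omit [DecidableEq V] in
theorem conjTranspose_mulVec_of_isSymm {U : Matrix V V ℂ} (hU : U.IsSymm) (v : V → ℂ) :
    Uᴴ *ᵥ v = star (U *ᵥ star v) := by
  rw [star_mulVec, star_star, ← mulVec_transpose, hU.conjTranspose.eq]

theorem mulVec_eC_eq_of_revival {U : Matrix V V ℂ} (hU : U ∈ unitaryGroup V ℂ)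
    (hUs : U.IsSymm) {a b : V} {α β : ℂ} (hβ : β ≠ 0) (hnorm : star α * α + star β * β = 1)
    (horth : star α * β + star β * α = 0) (h : U *ᵥ eC a = α • eC a + β • eC b) :
    U *ᵥ eC b = β • eC a + α • eC b := by
  have hback : U *ᵥ (star α • eC a + star β • eC b) = eC a := by
    have hinv : Uᴴ *ᵥ (U *ᵥ eC a) = eC a := by
      rw [mulVec_mulVec, ← star_eq_conjTranspose, (mem_unitaryGroup_iff').1 hU, one_mulVec]
    rw [h, conjTranspose_mulVec_of_isSymm hUs] at hinv
    simpa [star_eC] using congrArg star hinv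
  refine smul_right_injective _ (star_ne_zero.2 hβ) ?_
  simp only [mulVec_add, mulVec_smul, h] at hback
  linear_combination (norm := module) hback - hnorm • eC a - horth • eC b

theorem pow_mulVec_eC_of_revival {U : Matrix V V ℂ} {a b : V} {ζ γ : ℂ}
    (ha : U *ᵥ eC a = (exp (I * ζ) * cos γ) • eC a + (I * exp (I * ζ) * sin γ) • eC b)
    (hb : U *ᵥ eC b = (I * exp (I * ζ) * sin γ) • eC a + (exp (I * ζ) * cos γ) • eC b)
    (k : ℕ) :
    (U ^ k) *ᵥ eC a = (exp (I * (k * ζ)) * cos (k * γ)) • eC a +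
      (I * exp (I * (k * ζ)) * sin (k * γ)) • eC b := by
  induction k with
  | zero => simp
  | succ k ih =>
    rw [pow_succ', ← mulVec_mulVec, ih, mulVec_add, mulVec_smul, mulVec_smul, ha, hb]
    push_cast
    rw [add_mul, one_mul, add_mul, one_mul, mul_add I, exp_add, cos_add, sin_add]
    linear_combination (norm := module)
      (exp (I * (k * ζ)) * exp (I * ζ) * sin (k * γ) * sin γ * I_sq) • eC a

variable {A : Matrix V V ℝ}

theorem qwalk_mem_unitaryGroup (hA : A.IsSymm) (t : ℝ) : qwalk A t ∈ unitaryGroup V ℂ := by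
  set X : Matrix V V ℂ := (-(I * (t : ℂ))) • A.map (fun x => (x : ℂ))
  have hskew : Xᴴ = -X := by
    have hAc : (A.map fun x => (x : ℂ))ᴴ = A.map fun x => (x : ℂ) := by
      ext i j
      simp [hA.apply i j]
    simp [X, conjTranspose_smul, hAc]
  rw [mem_unitaryGroup_iff', star_eq_conjTranspose, qwalk, ← exp_conjTranspose, hskew,
    ← Matrix.exp_add_of_commute _ _ (Commute.refl X).neg_left, neg_add_cancel,
    NormedSpace.exp_zero]

theorem qwalk_isSymm (hA : A.IsSymm) (t : ℝ) : (qwalk A t).IsSymm :=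
  ((hA.map _).smul _).exp

theorem qwalk_natCast_mul (k : ℕ) (t : ℝ) : qwalk A (k * t) = qwalk A t ^ k := by
  rw [qwalk, qwalk, ← Matrix.exp_nsmul, ← Nat.cast_smul_eq_nsmul ℂ, smul_smul]
  push_cast
  ring_nf

end

theorem stmt8_general {n : ℕ} (A : Matrix (Fin n) (Fin n) ℝ) (hA : A.IsSymm)
    (a b : Fin n)
    (τ γ ζ : ℝ) (hirr : Irrational (γ / Real.pi))
    (hβ : Real.sin γ ≠ 0)
    (hrev : (qwalk A τ) *ᵥ eC a =
        (Complex.exp (Complex.I * ζ) * Real.cos γ) • eC a +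
        (Complex.I * Complex.exp (Complex.I * ζ) * Real.sin γ) • eC b) :
    ∀ ε : ℝ, 0 < ε → ∃ (t : ℝ) (ν : ℂ), ‖ν‖ = 1 ∧
      ‖(qwalk A t) *ᵥ eC a - ν • eC b‖ < ε := by
  intro ε hε
  have hmirror := mulVec_eC_eq_of_revival (qwalk_mem_unitaryGroup hA τ) (qwalk_isSymm hA τ)
    (mul_ne_zero (mul_ne_zero I_ne_zero (exp_ne_zero _)) (ofReal_ne_zero.2 hβ))
    (revival_coeff_normSq ζ γ) (revival_coeff_orth ζ γ) hrev
  obtain ⟨k, hk⟩ := exists_nat_abs_cos_mul_lt hirr (half_pos hε)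
  obtain ⟨σ, hσ, hsσ⟩ := exists_abs_eq_one_abs_sub_le (Real.cos_sq_add_sin_sq (k * γ))
  have hpow := pow_mulVec_eC_of_revival (by push_cast at hrev; exact hrev)
    (by push_cast at hmirror; exact hmirror) k
  set w := exp (I * (k * ζ))
  have hw : ‖w‖ = 1 := by simpa using norm_exp_I_mul_ofReal (k * ζ)
  refine ⟨k * τ, I * w * σ, by simp [hw, hσ], ?_⟩
  calc ‖qwalk A (k * τ) *ᵥ eC a - (I * w * σ) • eC b‖
      = ‖(w * Real.cos (k * γ)) • eC a + (I * w * ↑(Real.sin (k * γ) - σ)) • eC b‖ := by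
        rw [qwalk_natCast_mul, hpow]
        push_cast
        congr 1
        module
    _ ≤ |Real.cos (k * γ)| + |Real.sin (k * γ) - σ| := by
        refine (norm_smul_eC_add_smul_eC_le _ _ a b).trans_eq ?_
        simp only [norm_mul, norm_I, hw, norm_real, Real.norm_eq_abs, one_mul]
    _ < ε := by linarith

/-- If (e^{iζ}cos γ, i e^{iζ}sin γ)-revival occurs between strongly cospectral vertices
at time τ with γ/π irrational, then pretty good state transfer occurs from a to b. -/
theorem stmt8 {n m : ℕ} (A : Matrix (Fin n) (Fin n) ℝ) (hA : A.IsSymm)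
    (θ : Fin m → ℝ) (E : Fin m → Matrix (Fin n) (Fin n) ℝ)
    (hdecomp : A = ∑ r, θ r • E r)
    (hsum : ∑ r, E r = 1)
    (hsymm : ∀ r, (E r).IsSymm)
    (horth : ∀ r s, E r * E s = if r = s then E r else 0)
    (a b : Fin n) (hab : a ≠ b)
    (hsc : ∀ r, E r *ᵥ eR a = E r *ᵥ eR b ∨ E r *ᵥ eR a = -(E r *ᵥ eR b))
    (τ γ ζ : ℝ) (hirr : Irrational (γ / Real.pi))
    (hβ : Real.sin γ ≠ 0)
    (hrev : (qwalk A τ) *ᵥ eC a =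
        (Complex.exp (Complex.I * ζ) * Real.cos γ) • eC a +
        (Complex.I * Complex.exp (Complex.I * ζ) * Real.sin γ) • eC b) :
    ∀ ε : ℝ, 0 < ε → ∃ (t : ℝ) (ν : ℂ), ‖ν‖ = 1 ∧
      ‖(qwalk A t) *ᵥ eC a - ν • eC b‖ < ε :=
  stmt8_general A hA a b τ γ ζ hirr hβ hrev
end

section
/- The cycle C₆ admits (−1/2, (√3/2)i)-revival between antipodal vertices at time 2π/3: exp(-i(2π/3)A(C₆)) e_a = −(1/2) e_a + (√3/2)i e_{a+3}. -/
/-!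
The characters `ψ` of `ℤ/6` form a basis of `ℤ/6 → ℂ` and are eigenvectors of every Cayley
adjacency matrix; for `C₆` the eigenvalue is `ω + ω⁻¹` with `ω = ψ (-1)` a sixth root of unity,
so it is `2` or `-1` when `ω³ = 1` and `-2` or `1` when `ω³ = -1`. In all four cases
`exp (-i (2π/3) (ω + ω⁻¹)) = -1/2 + (√3/2) i ω³`, and `ω³ = ψ (-3)` is exactly the eigenvalue
of `ψ` under the antipodal translation `P v = v (· - 3)`. Hence `U(2π/3) = -1/2 + (√3/2) i P`
on the character basis, so on all vectors, and `P e_a = e_{a+3}`.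
-/

open Matrix Complex BigOperators

section
attribute [local instance] Matrix.linftyOpNormedRing Matrix.linftyOpNormedAlgebra

theorem Matrix.exp_mulVec_of_mulVec_eq_smul {n : Type*} [Fintype n] [DecidableEq n]
    {X : Matrix n n ℂ} {v : n → ℂ} {μ : ℂ} (h : X *ᵥ v = μ • v) :
    NormedSpace.exp X *ᵥ v = Complex.exp μ • v := by
  have hpow (k : ℕ) : X ^ k *ᵥ v = μ ^ k • v := by
    induction k with
    | zero => simp
    | succ k ih => rw [pow_succ', ← mulVec_mulVec, ih, mulVec_smul, h, smul_smul, ← pow_succ]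
  have hX := (NormedSpace.exp_series_hasSum_exp' (𝕂 := ℂ) X).map (mulVec.addMonoidHomLeft v)
    (continuous_id.matrix_mulVec continuous_const)
  have hμ := (NormedSpace.exp_series_hasSum_exp' (𝕂 := ℂ) μ).smul_const v
  rw [← Complex.exp_eq_exp_ℂ] at hμ
  refine hX.unique ?_
  convert hμ using 2 with k
  simp [mulVec.addMonoidHomLeft, smul_mulVec, hpow, smul_smul]

end

theorem qwalk_mulVec_of_mulVec_eq_smul {V : Type*} [Fintype V] [DecidableEq V]
    {A : Matrix V V ℝ} {v : V → ℂ} {μ : ℂ} (h : A.map (↑) *ᵥ v = μ • v) (t : ℝ) :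
    qwalk A t *ᵥ v = Complex.exp (-(I * t) * μ) • v :=
  exp_mulVec_of_mulVec_eq_smul (by rw [smul_mulVec, h, smul_smul])

def cayleyMatrix {G R : Type*} [AddGroup G] [DecidableEq G] [Zero R] [One R] (S : Finset G) :
    Matrix G G R :=
  of fun i j => if j - i ∈ S then 1 else 0

theorem AddChar.cayleyMatrix_mulVec {G R : Type*} [AddCommGroup G] [Fintype G] [DecidableEq G]
    [CommSemiring R] (S : Finset G) (ψ : AddChar G R) :
    cayleyMatrix S *ᵥ ⇑ψ = (∑ s ∈ S, ψ s) • ⇑ψ := by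
  ext i
  rw [mulVec, dotProduct, ← Equiv.sum_comp (Equiv.addLeft i)]
  simp [cayleyMatrix, AddChar.map_add_eq_mul, ← Finset.mul_sum, mul_comm]

def cycleAdj (G : Type*) [AddGroupWithOne G] [DecidableEq G] : Matrix G G ℝ :=
  of fun i j => if i = j + 1 ∨ j = i + 1 then 1 else 0

theorem cycleAdj_map_ofReal {G : Type*} [AddCommGroupWithOne G] [DecidableEq G] :
    (cycleAdj G).map ((↑) : ℝ → ℂ) = cayleyMatrix {-1, 1} := by
  ext i j
  simp only [map_apply, cycleAdj, cayleyMatrix, of_apply, Finset.mem_insert,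
    Finset.mem_singleton, sub_eq_iff_eq_add', eq_add_neg_iff_add_eq, eq_comm (a := i)]
  split_ifs <;> simp

theorem AddChar.funLeft_sub_apply {G R : Type*} [AddCommGroup G] [CommSemiring R]
    (ψ : AddChar G R) (d : G) : LinearMap.funLeft R R (· - d) ψ = ψ (-d) • ψ := by
  ext j
  simp [sub_eq_add_neg, AddChar.map_add_eq_mul, mul_comm]

theorem funLeft_sub_eC {G : Type*} [AddGroup G] [DecidableEq G] (a d : G) :
    LinearMap.funLeft ℂ ℂ (· - d) (eC a) = eC (a + d) := by
  ext j
  simp [eC, Pi.single_apply, sub_eq_iff_eq_add]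

theorem qwalk_cycleAdj_mulVec_addChar {G : Type*} [AddCommGroupWithOne G] [Fintype G]
    [DecidableEq G] (ψ : AddChar G ℂ) (t : ℝ) (hG : (-1 : G) ≠ 1) :
    qwalk (cycleAdj G) t *ᵥ ψ = Complex.exp (-(I * t) * (ψ (-1) + ψ 1)) • ψ := by
  refine qwalk_mulVec_of_mulVec_eq_smul ?_ t
  rw [cycleAdj_map_ofReal, ψ.cayleyMatrix_mulVec, Finset.sum_pair hG]

open Real

theorem Complex.exp_two_pi_div_three_mul_I :
    Complex.exp (↑(2 * π / 3) * I) = -(1 / 2) + √3 / 2 * I := by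
  rw [exp_mul_I, ← ofReal_cos, ← ofReal_sin, show 2 * π / 3 = π - π / 3 by ring,
    Real.cos_pi_sub, Real.sin_pi_sub, cos_pi_div_three, sin_pi_div_three]
  push_cast; ring

theorem Complex.exp_neg_two_pi_div_three_mul_I :
    Complex.exp (-(↑(2 * π / 3) * I)) = -(1 / 2) - √3 / 2 * I := by
  rw [← neg_mul, ← ofReal_neg, exp_mul_I, ← ofReal_cos, ← ofReal_sin, Real.cos_neg,
    Real.sin_neg, show 2 * π / 3 = π - π / 3 by ring,
    Real.cos_pi_sub, Real.sin_pi_sub, cos_pi_div_three, sin_pi_div_three]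
  push_cast; ring

theorem add_inv_eq_of_pow_six_eq_one {K : Type*} [Field K] {ω : K} (h : ω ^ 6 = 1) :
    ω ^ 3 = 1 ∧ (ω + ω⁻¹ = 2 ∨ ω + ω⁻¹ = -1) ∨
      ω ^ 3 = -1 ∧ (ω + ω⁻¹ = -2 ∨ ω + ω⁻¹ = 1) := by
  have hω : ω ≠ 0 := by rintro rfl; norm_num at h
  have h3 : (ω ^ 3 - 1) * (ω ^ 3 + 1) = 0 := by linear_combination h
  rcases mul_eq_zero.1 h3 with h3 | h3
  · have : (ω - 1) * (ω ^ 2 + ω + 1) = 0 := by linear_combination h3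
    refine .inl ⟨by linear_combination h3, ?_⟩
    rcases mul_eq_zero.1 this with h1 | h1
    · left; rw [sub_eq_zero.1 h1]; norm_num
    · right; field_simp; linear_combination h1
  · have : (ω + 1) * (ω ^ 2 - ω + 1) = 0 := by linear_combination h3
    refine .inr ⟨by linear_combination h3, ?_⟩
    rcases mul_eq_zero.1 this with h1 | h1
    · left; rw [eq_neg_of_add_eq_zero_left h1]; norm_num
    · right; field_simp; linear_combination h1

theorem exp_neg_two_pi_div_three_mul_I_mul_add_inv {ω : ℂ} (h : ω ^ 6 = 1) :
    Complex.exp (-(I * ↑(2 * π / 3)) * (ω + ω⁻¹)) = -(1 / 2) + √3 / 2 * I * ω ^ 3 := by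
  rcases add_inv_eq_of_pow_six_eq_one h with ⟨h3, hsum | hsum⟩ | ⟨h3, hsum | hsum⟩ <;>
    rw [h3, hsum]
  · rw [show -(I * ↑(2 * π / 3)) * 2 = ↑(2 * π / 3) * I - 2 * π * I by push_cast; ring,
      Complex.exp_sub, exp_two_pi_mul_I, div_one, exp_two_pi_div_three_mul_I]
    ring
  · rw [show -(I * ↑(2 * π / 3)) * -1 = ↑(2 * π / 3) * I by ring, exp_two_pi_div_three_mul_I]
    ring
  · rw [show -(I * ↑(2 * π / 3)) * -2 = -(↑(2 * π / 3) * I) + 2 * π * I by push_cast; ring,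
      Complex.exp_add, exp_two_pi_mul_I, mul_one, exp_neg_two_pi_div_three_mul_I]
    ring
  · rw [show -(I * ↑(2 * π / 3)) * 1 = -(↑(2 * π / 3) * I) by ring,
      exp_neg_two_pi_div_three_mul_I]
    ring

theorem toLin'_qwalk_cycleAdj_zmod_six_two_pi_div_three :
    toLin' (qwalk (cycleAdj (ZMod 6)) (2 * π / 3)) =
      (-(1 / 2) : ℂ) • LinearMap.id + (√3 / 2 * I) • LinearMap.funLeft ℂ ℂ (· - 3) := by
  refine (AddChar.complexBasis (ZMod 6)).ext fun ψ => ?_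
  have h6 : ψ (-1) ^ 6 = 1 := by
    rw [← AddChar.map_nsmul_eq_pow, show (6 • -1 : ZMod 6) = 0 by decide, AddChar.map_zero_eq_one]
  have h3 : ψ (-3) = ψ (-1) ^ 3 := by
    rw [← AddChar.map_nsmul_eq_pow, show (3 • -1 : ZMod 6) = -3 by decide]
  have h1 : ψ 1 = (ψ (-1))⁻¹ := by rw [← AddChar.map_neg_eq_inv, neg_neg]
  rw [AddChar.complexBasis_apply, toLin'_apply, qwalk_cycleAdj_mulVec_addChar ψ _ (by decide),
    h1, exp_neg_two_pi_div_three_mul_I_mul_add_inv h6, LinearMap.add_apply, LinearMap.smul_apply,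
    LinearMap.smul_apply, LinearMap.id_apply, ψ.funLeft_sub_apply, h3, smul_smul, ← add_smul]

/-- The cycle C₆ admits (−1/2, (√3/2)i)-revival between antipodal vertices at time 2π/3. -/
theorem stmt16 (a : ZMod 6) :
    (qwalk (fun i j : ZMod 6 => if i = j + 1 ∨ j = i + 1 then (1 : ℝ) else 0)
        (2 * Real.pi / 3)) *ᵥ eC a =
      (-(1 / 2) : ℂ) • eC a + ((Real.sqrt 3 / 2) * Complex.I) • eC (a + 3) := by
  change qwalk (cycleAdj (ZMod 6)) (2 * π / 3) *ᵥ eC a = _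
  have h := LinearMap.congr_fun toLin'_qwalk_cycleAdj_zmod_six_two_pi_div_three (eC a)
  rwa [toLin'_apply, LinearMap.add_apply, LinearMap.smul_apply, LinearMap.smul_apply,
    LinearMap.id_apply, funLeft_sub_eC] at h
end
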